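/- The limit as n → ∞ of 2a_n/n equals 1, where a_n = (1/2)·[n + 2 - (n·C(2n,n) + 2)/2^(2n)]. -/
import Mathlib


open Filter

noncomputable def cbr (n : ℕ) : ℝ := (Nat.centralBinom n : ℝ) / 4 ^ n

lemma cbr_nonneg (n : ℕ) : 0 ≤ cbr n := by
  unfold cbr; positivity

lemma cbr_succ (n : ℕ) : cbr (n + 1) = cbr n * ((2 * n + 1) / (2 * n + 2)) := by
  have h := Nat.succ_mul_centralBinom_succ n
  have h' : ((n : ℝ) + 1) * Nat.centralBinom (n + 1) = 2 * (2 * n + 1) * Nat.centralBinom n := by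
    exact_mod_cast h
  unfold cbr
  have hn1 : (n : ℝ) + 1 ≠ 0 := by positivity
  have h4 : (4 : ℝ) ^ n ≠ 0 := by positivity
  field_simp [pow_succ]
  linear_combination (4:ℝ) ^ n * 2 * h'

lemma cbr_sq_mul_le (n : ℕ) : cbr n ^ 2 * (2 * n + 1) ≤ 1 := by
  induction n with
  | zero => simp [cbr, Nat.centralBinom]
  | succ n ih =>
    rw [cbr_succ]
    push_cast
    have key : ((2 * (n:ℝ) + 1) / (2 * n + 2)) ^ 2 * (2 * ((n:ℝ) + 1) + 1) ≤ 2 * n + 1 := by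
      rw [div_pow, div_mul_eq_mul_div, div_le_iff₀ (by positivity)]
      nlinarith [sq_nonneg ((n:ℝ))]
    have h2 := mul_le_mul_of_nonneg_left key (sq_nonneg (cbr n))
    nlinarith [sq_nonneg (cbr n), ih]

lemma cbr_sq_le (n : ℕ) : cbr n ^ 2 ≤ 1 / (2 * n + 1) := by
  rw [le_div_iff₀ (by positivity)]
  exact cbr_sq_mul_le n

lemma cbr_tendsto : Filter.Tendsto cbr Filter.atTop (nhds 0) := by
  have hb : ∀ n : ℕ, cbr n ≤ Real.sqrt (1 / (2 * n + 1)) := by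
    intro n
    have := Real.sqrt_le_sqrt (cbr_sq_le n)
    rwa [Real.sqrt_sq (cbr_nonneg n)] at this
  have h0 : Filter.Tendsto (fun n : ℕ => (1 : ℝ) / (2 * n + 1)) Filter.atTop (nhds 0) := by
    simp only [one_div]
    apply Filter.Tendsto.comp tendsto_inv_atTop_zero
    apply Filter.tendsto_atTop_add_const_right
    exact (tendsto_natCast_atTop_atTop).const_mul_atTop (by norm_num)
  have hsq : Filter.Tendsto (fun n : ℕ => Real.sqrt (1 / (2 * n + 1))) Filter.atTop (nhds 0) := by
    have := (Real.continuous_sqrt.tendsto 0).comp h0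
    rw [Real.sqrt_zero] at this
    exact this
  exact squeeze_zero cbr_nonneg hb hsq

theorem stmt_2 (a : ℕ → ℝ)
    (ha : ∀ n : ℕ, a n = (1 / 2) * ((n : ℝ) + 2 - ((n : ℝ) * ((2 * n).choose n) + 2) / 2 ^ (2 * n))) :
    Filter.Tendsto (fun n : ℕ => 2 * a n / n) Filter.atTop (nhds 1) := by
  have heq : ∀ᶠ n : ℕ in atTop, 2 * a n / n = 1 + 2 / n - cbr n - 2 / (n * 4 ^ n) := by
    filter_upwards [eventually_ge_atTop 1] with n hn
    have hn0 : (n : ℝ) ≠ 0 := by positivity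
    have h4 : (4 : ℝ) ^ n ≠ 0 := by positivity
    rw [ha n]
    unfold cbr
    rw [Nat.centralBinom_eq_two_mul_choose]
    have h24 : (2 : ℝ) ^ (2 * n) = 4 ^ n := by
      rw [pow_mul]; norm_num
    rw [h24]
    field_simp
    ring
  rw [Filter.tendsto_congr' heq]
  have h1 : Filter.Tendsto (fun n : ℕ => (2 : ℝ) / n) atTop (nhds 0) :=
    tendsto_const_div_atTop_nhds_zero_nat 2
  have h2 : Filter.Tendsto (fun n : ℕ => (2 : ℝ) / (n * 4 ^ n)) atTop (nhds 0) := by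
    apply squeeze_zero (fun n => by positivity) (g := fun n : ℕ => (2 : ℝ) / n) _ h1
    intro n
    rcases Nat.eq_zero_or_pos n with h | h
    · simp [h]
    · apply div_le_div_of_nonneg_left (by norm_num) (by positivity)
      have hp : (1:ℝ) ≤ 4 ^ n := one_le_pow₀ (by norm_num)
      have hn : (0:ℝ) < n := by exact_mod_cast h
      nlinarith
  have hc : Tendsto (fun _ : ℕ => (1:ℝ)) atTop (nhds 1) := tendsto_const_nhds
  have := ((hc.add h1).sub cbr_tendsto).sub h2
  simpa using this
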